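/- For every integer N ≥ 2, with ξ_n^N := 1 for n < N, ξ_n^N := (2 log N − log n)/log N for N ≤ n ≤ N², ξ_n^N := 0 for n > N², and u_n^N := ξ_n^N √n, one has ∑_{n=2}^∞ |((n−1)/n)^{1/4} u_n^N − (n/(n−1))^{1/4} u_{n−1}^N|² ≤ 4/log N. In particular, this remainder tends to 0 as N → ∞. -/

import Mathlib

/-- The logarithmic cutoff `ξ_n^N`: equal to `1` for `n < N`,
to `(2 log N - log n)/log N` for `N ≤ n ≤ N²`, and to `0` for `n > N²`. -/
noncomputable def xi (N n : ℕ) : ℝ :=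
  if n < N then 1
  else if n ≤ N ^ 2 then (2 * Real.log N - Real.log n) / Real.log N
  else 0

/-- The remainder term of the regularized sequence `u_n^N = ξ_n^N √n`. -/
noncomputable def remainder (N : ℕ) : ℝ :=
  ∑' n : ℕ, |((((n : ℝ) + 1) / ((n : ℝ) + 2)) ^ ((1 : ℝ) / 4))
        * (xi N (n + 2) * Real.sqrt ((n : ℝ) + 2))
      - ((((n : ℝ) + 2) / ((n : ℝ) + 1)) ^ ((1 : ℝ) / 4))
        * (xi N (n + 1) * Real.sqrt ((n : ℝ) + 1))| ^ 2

/-!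
Writing `√n = (n^{1/4})²`, the summand indexed by `n` becomes `√n √(n+1) (ξ_{n+1} - ξ_n)²` (shifting
the index by one), which vanishes unless `N ≤ n < N²`. There `ξ_n - ξ_{n+1} = log (1 + 1/n) / log N`
and `log (1 + 1/n) ≤ 1/n`, so the summand is at most `2 (log (n+1) - log n) / (log N)²`;
the sum telescopes to `2 / log N`.
-/

open Finset Real

lemma sqrt_eq_rpow_quarter_sq {a : ℝ} (ha : 0 ≤ a) : √a = (a ^ ((1 : ℝ) / 4)) ^ 2 := by
  rw [sqrt_eq_rpow, ← rpow_mul_natCast ha]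
  norm_num

lemma abs_rpow_mul_sqrt_sub_sq {a b : ℝ} (ha : 0 < a) (hb : 0 < b) (x y : ℝ) :
    |(a / b) ^ ((1 : ℝ) / 4) * (x * √b) - (b / a) ^ ((1 : ℝ) / 4) * (y * √a)| ^ 2
      = √a * √b * (x - y) ^ 2 := by
  rw [sq_abs, div_rpow ha.le hb.le, div_rpow hb.le ha.le,
    sqrt_eq_rpow_quarter_sq ha.le, sqrt_eq_rpow_quarter_sq hb.le]
  field_simp

lemma mul_sq_log_succ_sub_log_le {a : ℝ} (ha : 1 ≤ a) :
    √a * √(a + 1) * (log (a + 1) - log a) ^ 2 ≤ 2 * (log (a + 1) - log a) := by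
  have ha0 : 0 < a := by linarith
  set Δ := log (a + 1) - log a
  have hΔ_nonneg : 0 ≤ Δ := sub_nonneg.2 (log_le_log ha0 (by linarith))
  have hΔ_le : a * Δ ≤ 1 := by
    have h := log_le_sub_one_of_pos (show 0 < (a + 1) / a by positivity)
    rw [log_div (by positivity) ha0.ne', div_sub_one ha0.ne', add_sub_cancel_left,
      le_div_iff₀ ha0] at h
    linarith
  have hsqrt : √a * √(a + 1) ≤ 2 * a := by
    calc √a * √(a + 1) ≤ √(a + 1) * √(a + 1) := by gcongr; linarith
      _ = a + 1 := mul_self_sqrt (by linarith)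
      _ ≤ 2 * a := by linarith
  calc √a * √(a + 1) * Δ ^ 2 ≤ 2 * a * Δ * Δ := by
        rw [mul_assoc (2 * a), ← sq]; gcongr
    _ ≤ 2 * Δ := by nlinarith

section xi

variable {N m : ℕ}

lemma xi_of_lt (h : m < N) : xi N m = 1 := if_pos h

lemma xi_of_le_of_le_sq (h₁ : N ≤ m) (h₂ : m ≤ N ^ 2) :
    xi N m = (2 * log N - log m) / log N := by
  rw [xi, if_neg (by omega), if_pos h₂]

lemma xi_of_sq_le (h : N ^ 2 ≤ m) : xi N m = 0 := by
  have hN : N ≤ N ^ 2 := Nat.le_self_pow two_ne_zero N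
  rcases h.lt_or_eq with h | rfl
  · rw [xi, if_neg (by omega), if_neg (by omega)]
  · rw [xi_of_le_of_le_sq hN le_rfl, Nat.cast_pow, log_pow]
    simp

lemma xi_self (hN : 2 ≤ N) : xi N N = 1 := by
  have hlog : log N ≠ 0 := (log_pos (by exact_mod_cast hN)).ne'
  rw [xi_of_le_of_le_sq le_rfl (Nat.le_self_pow two_ne_zero N)]
  field_simp
  ring

lemma xi_succ_of_lt (hN : 2 ≤ N) (h : m < N) : xi N (m + 1) = xi N m := by
  rw [xi_of_lt h]
  rcases (show m + 1 ≤ N from h).lt_or_eq with h' | h'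
  · exact xi_of_lt h'
  · rw [h', xi_self hN]

lemma xi_succ_of_sq_le (h : N ^ 2 ≤ m) : xi N (m + 1) = xi N m := by
  rw [xi_of_sq_le h, xi_of_sq_le (by omega)]

lemma xi_succ_sub_xi (h₁ : N ≤ m) (h₂ : m < N ^ 2) :
    xi N (m + 1) - xi N m = -(log (m + 1) - log m) / log N := by
  rw [xi_of_le_of_le_sq (by omega) h₂, xi_of_le_of_le_sq h₁ h₂.le]
  push_cast
  ring

end xi

lemma remainder_eq_sum {N : ℕ} (hN : 2 ≤ N) :
    remainder N = ∑ m ∈ Ico N (N ^ 2), √m * √(m + 1) * (xi N (m + 1) - xi N m) ^ 2 := by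
  set g : ℕ → ℝ := fun m ↦ √m * √(m + 1) * (xi N (m + 1) - xi N m) ^ 2
  have hterm (n : ℕ) :
      |(((n : ℝ) + 1) / ((n : ℝ) + 2)) ^ ((1 : ℝ) / 4) * (xi N (n + 2) * √((n : ℝ) + 2))
        - (((n : ℝ) + 2) / ((n : ℝ) + 1)) ^ ((1 : ℝ) / 4) * (xi N (n + 1) * √((n : ℝ) + 1))| ^ 2
        = g (n + 1) := by
    rw [abs_rpow_mul_sqrt_sub_sq (by positivity) (by positivity)]
    simp only [g]
    push_cast
    ring_nf
  have hsupp (n : ℕ) (hn : n ∉ Ico (N - 1) (N ^ 2 - 1)) : g (n + 1) = 0 := by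
    have hflat : xi N (n + 1 + 1) = xi N (n + 1) := by
      rw [mem_Ico, not_and_or, not_le, not_lt] at hn
      rcases hn with hn | hn
      · exact xi_succ_of_lt hN (by omega)
      · exact xi_succ_of_sq_le (by omega)
    simp only [g, hflat, sub_self]
    ring
  have hN1 : 1 ≤ N := by omega
  have hN2 : 1 ≤ N ^ 2 := Nat.one_le_pow _ _ (by omega)
  calc remainder N = ∑' n, g (n + 1) := tsum_congr hterm
    _ = ∑ n ∈ Ico (N - 1) (N ^ 2 - 1), g (n + 1) := tsum_eq_sum hsupp
    _ = ∑ m ∈ Ico N (N ^ 2), g m := by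
      rw [sum_Ico_add' g, Nat.sub_add_cancel hN1, Nat.sub_add_cancel hN2]

lemma remainder_le {N : ℕ} (hN : 2 ≤ N) : remainder N ≤ 4 / log N := by
  have hlog : 0 < log N := log_pos (by exact_mod_cast hN)
  have hterm (m : ℕ) (hm : m ∈ Ico N (N ^ 2)) :
      √m * √(m + 1) * (xi N (m + 1) - xi N m) ^ 2
        ≤ 2 * (log (m + 1 : ℕ) - log m) / log N ^ 2 := by
    rw [mem_Ico] at hm
    have h1 : (1 : ℝ) ≤ m := by exact_mod_cast (show 1 ≤ m by omega)
    rw [xi_succ_sub_xi hm.1 hm.2, div_pow, neg_sq, ← mul_div_assoc, Nat.cast_succ]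
    exact div_le_div_of_nonneg_right (mul_sq_log_succ_sub_log_le h1) (by positivity)
  calc remainder N
      = ∑ m ∈ Ico N (N ^ 2), √m * √(m + 1) * (xi N (m + 1) - xi N m) ^ 2 := remainder_eq_sum hN
    _ ≤ ∑ m ∈ Ico N (N ^ 2), 2 * (log (m + 1 : ℕ) - log m) / log N ^ 2 := sum_le_sum hterm
    _ = 2 * (log (N ^ 2 : ℕ) - log N) / log N ^ 2 := by
      rw [← sum_div, ← mul_sum, sum_Ico_sub (fun k : ℕ ↦ log k) (Nat.le_self_pow two_ne_zero N)]
    _ = 2 / log N := by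
      rw [Nat.cast_pow, log_pow]
      field_simp
      ring
    _ ≤ 4 / log N := by gcongr; norm_num

/-- For every integer `N ≥ 2`, the remainder is at most `4 / log N`; in particular it
tends to `0` as `N → ∞`. -/
theorem remainder_le_and_tendsto_zero :
    (∀ N : ℕ, 2 ≤ N → remainder N ≤ 4 / Real.log N)
      ∧ Filter.Tendsto remainder Filter.atTop (nhds 0) := by
  refine ⟨fun N hN ↦ remainder_le hN, ?_⟩
  have hnonneg (N : ℕ) : 0 ≤ remainder N := tsum_nonneg fun n ↦ by positivity
  refine squeeze_zero' (.of_forall hnonneg) (Filter.eventually_atTop.2 ⟨2, fun N ↦ remainder_le⟩) ?_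
  exact tendsto_const_nhds.div_atTop (tendsto_log_atTop.comp tendsto_natCast_atTop_atTop)
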